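/- (Upper bound (A.10), general m.) Suppose the m-parameter design problem of the context satisfies condition (2.9) with constant c₀ > 0 and Q(β,β̃) ≤ c₁ |ℓ(β) − ℓ(β̃)|^{−γ} for all β, β̃ ∈ ℬ, with constants c₁, γ > 0. Let B = ℓ(β_max) − ℓ(β_min) > 0 and let ξ be a design supported at at most N points, and set K = m·C(N,m) (with C(N,m) the binomial coefficient). Then Φ(ξ) = inf_{β∈ℬ} det M(ξ,β)/det M(ξ[β],β) ≤ c₀ m c₁ (2(K+1)/B)^γ. -/

import Mathlib

/-!
By the Cauchy–Binet formula, `m! · det M(ξ,β)` is the average of `I_m` over the `m`-tuples of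
support points of `ξ`, weighted by the products of their weights; tuples with a repeated point
contribute zero, and `I_m` of a tuple only depends on its set of points. Condition (2.9) attaches
to each of the at most `C(N,m)` relevant point sets `m` anchor parameters `β̃`, so at most `K`
scale values `ℓ(β̃)`. By pigeonhole some `t` in `[ℓ(β_min), ℓ(β_max)]` lies at distance at least
`B / (2(K+1))` from all of them, and by continuity `t = ℓ(β*)`. At `β*` the efficiency bound gives
`det M(ξ[β̃],β*) ≤ c₁ (2(K+1)/B)^γ det M(ξ[β*],β*)` for every anchor, hence
`det M(ξ,β*) ≤ c₀ m c₁ (2(K+1)/B)^γ det M(ξ[β*],β*)`.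
-/

open scoped BigOperators

/-- An approximate design: a finitely supported probability measure on `X`,
given by its support points and positive weights summing to one. -/
structure Design (X : Type*) where
  support : Finset X
  w : X → ℝ
  w_pos : ∀ x ∈ support, 0 < w x
  w_zero : ∀ x ∉ support, w x = 0
  sum_one : ∑ x ∈ support, w x = 1

/-- Information matrix `M(ξ,β) = ∑ₖ wₖ f(xₖ,β) f(xₖ,β)ᵀ`. -/
noncomputable def infoMat {X : Type*} {m : ℕ} (f : X → ℝ → Fin m → ℝ)
    (ξ : Design X) (β : ℝ) : Matrix (Fin m) (Fin m) ℝ :=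
  ∑ x ∈ ξ.support, ξ.w x • Matrix.vecMulVec (f x β) (f x β)

/-- `I_m(x₁,…,x_m,β) = det[f(x₁,β) ⋯ f(x_m,β)]²`. -/
noncomputable def detIm {X : Type*} {m : ℕ} (f : X → ℝ → Fin m → ℝ)
    (xs : Fin m → X) (β : ℝ) : ℝ :=
  (Matrix.det (Matrix.of fun i j => f (xs j) β i)) ^ 2

open Matrix Equiv

section CauchyBinet
variable {n R ι : Type*} [Fintype n] [DecidableEq n] [CommRing R]

theorem Matrix.det_sum_vecMulVec (s : Finset ι) (u v : ι → n → R) :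
    det (∑ x ∈ s, vecMulVec (u x) (v x)) =
      ∑ g ∈ Fintype.piFinset fun _ : n => s, (∏ i, u (g i) i) * det (of (v ∘ g)) := by
  have hrows : ∑ x ∈ s, vecMulVec (u x) (v x) = of fun i => ∑ x ∈ s, u x i • v x := by
    ext i j
    simp [Matrix.sum_apply, vecMulVec_apply]
  rw [hrows]
  change detRowAlternating (fun i => ∑ x ∈ s, u x i • v x) = _
  refine ((detRowAlternating : (n → R) [⋀^n]→ₗ[R] R).toMultilinearMap.map_sum_finset
    (fun i x => u x i • v x) fun _ => s).trans ?_
  exact Finset.sum_congr rfl fun g _ =>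
    (detRowAlternating : (n → R) [⋀^n]→ₗ[R] R).toMultilinearMap.map_smul_univ _ _

theorem Fintype.sum_piFinset_const_comp_perm {M : Type*} [AddCommMonoid M]
    (s : Finset ι) (σ : Perm n) (F : (n → ι) → M) :
    ∑ g ∈ Fintype.piFinset (fun _ : n => s), F (g ∘ σ) =
      ∑ g ∈ Fintype.piFinset (fun _ : n => s), F g :=
  Finset.sum_nbij' (· ∘ σ) (· ∘ σ.symm) (fun g hg => by simp_all [Fintype.mem_piFinset])
    (fun g hg => by simp_all [Fintype.mem_piFinset]) (fun g _ => by ext; simp)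
    (fun g _ => by ext; simp) fun _ _ => rfl

theorem Matrix.factorial_card_smul_det_sum_vecMulVec (s : Finset ι) (u v : ι → n → R) :
    (Fintype.card n).factorial • det (∑ x ∈ s, vecMulVec (u x) (v x)) =
      ∑ g ∈ Fintype.piFinset fun _ : n => s, det (of (u ∘ g)) * det (of (v ∘ g)) := by
  set T := Fintype.piFinset fun _ : n => s
  calc (Fintype.card n).factorial • det (∑ x ∈ s, vecMulVec (u x) (v x))
      = ∑ σ : Perm n, ∑ g ∈ T, (∏ i, u (g (σ i)) i) * det (of (v ∘ g ∘ σ)) := by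
        rw [← Fintype.card_perm, ← Finset.card_univ, ← Finset.sum_const, det_sum_vecMulVec]
        exact Finset.sum_congr rfl fun σ _ =>
          (Fintype.sum_piFinset_const_comp_perm s σ _).symm
    _ = ∑ g ∈ T, ∑ σ : Perm n, (Perm.sign σ * ∏ i, u (g (σ i)) i) * det (of (v ∘ g)) := by
        rw [Finset.sum_comm]
        refine Finset.sum_congr rfl fun g _ => Finset.sum_congr rfl fun σ _ => ?_
        rw [show of (v ∘ g ∘ σ) = (of (v ∘ g)).submatrix σ id from rfl, det_permute]
        ring
    _ = ∑ g ∈ T, det (of (u ∘ g)) * det (of (v ∘ g)) := by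
        refine Finset.sum_congr rfl fun g _ => ?_
        rw [det_apply' (of (u ∘ g)), Finset.sum_mul]
        rfl
end CauchyBinet

theorem exists_mem_Icc_forall_le_abs_sub (P : Finset ℝ) {K : ℕ} (hP : P.card ≤ K) (a : ℝ)
    {B : ℝ} (hB : 0 < B) : ∃ t ∈ Set.Icc a (a + B), ∀ p ∈ P, B / (2 * (K + 1)) ≤ |t - p| := by
  set d := B / (2 * ((K : ℝ) + 1))
  have hd : 0 < d := by positivity
  have hdB : 2 * ((K : ℝ) + 1) * d = B := mul_div_cancel₀ B (by positivity)
  by_contra! hfar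
  -- the `K + 1` points `a + (2i+1)d` are `2d` apart, so no `p` is `d`-close to two of them
  have ht (i : ℕ) (hi : i ∈ Finset.range (K + 1)) :
      a + (2 * i + 1) * d ∈ Set.Icc a (a + B) := by
    have : (i : ℝ) ≤ K := mod_cast Nat.lt_succ_iff.1 (Finset.mem_range.1 hi)
    constructor <;> nlinarith
  choose! p hpP hpd using fun i hi => hfar _ (ht i hi)
  obtain ⟨i, hi, j, hj, hij, hpij⟩ := Finset.exists_ne_map_eq_of_card_lt_of_maps_to
    (by simpa using hP.trans_lt K.lt_succ_self) hpP
  have hi' := abs_sub_lt_iff.1 (hpd i hi)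
  have hj' := abs_sub_lt_iff.1 (hpd j hj)
  rw [hpij] at hi'
  rcases Nat.lt_or_gt_of_ne hij with h | h
  · have : (i : ℝ) + 1 ≤ j := mod_cast h
    nlinarith
  · have : (j : ℝ) + 1 ≤ i := mod_cast h
    nlinarith

theorem exists_mem_Icc_forall_le_abs_apply_sub {ℓ : ℝ → ℝ} {a b : ℝ} (hab : a ≤ b)
    (hℓ : ContinuousOn ℓ (Set.Icc a b)) (hℓab : ℓ a < ℓ b) (P : Finset ℝ) {K : ℕ}
    (hP : P.card ≤ K) :
    ∃ β ∈ Set.Icc a b, ∀ p ∈ P, (ℓ b - ℓ a) / (2 * (K + 1)) ≤ |ℓ β - p| := by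
  obtain ⟨t, ht, hsep⟩ := exists_mem_Icc_forall_le_abs_sub P hP (ℓ a) (sub_pos.2 hℓab)
  obtain ⟨β, hβ, rfl⟩ := intermediate_value_Icc hab hℓ (by rwa [add_sub_cancel] at ht)
  exact ⟨β, hβ, hsep⟩

theorem Finset.card_image_powersetCard_product_le {α β : Type*} [DecidableEq β] {s : Finset α}
    {N : ℕ} (hs : s.card ≤ N) (m : ℕ) (F : Finset α × Fin m → β) :
    ((s.powersetCard m ×ˢ Finset.univ).image F).card ≤ m * N.choose m := by
  refine Finset.card_image_le.trans ?_
  rw [Finset.card_product, Finset.card_powersetCard, Finset.card_fin, mul_comm]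
  exact Nat.mul_le_mul_left m (Nat.choose_le_choose m hs)

theorem le_mul_inv_rpow_of_mul_rpow_le {q c d δ γ : ℝ} (hq : 0 ≤ q) (hd : 0 < d) (hdδ : d ≤ δ)
    (hγ : 0 ≤ γ) (h : q * δ ^ γ ≤ c) : q ≤ c * d⁻¹ ^ γ := by
  rw [Real.inv_rpow hd.le, ← div_eq_mul_inv, le_div_iff₀ (Real.rpow_pos_of_pos hd γ)]
  exact (mul_le_mul_of_nonneg_left (Real.rpow_le_rpow hd.le hdδ hγ) hq).trans h

section Design
variable {X : Type*} {m : ℕ} (f : X → ℝ → Fin m → ℝ)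

theorem detIm_eq_det_sq (g : Fin m → X) (β : ℝ) :
    detIm f g β = det (of fun i => f (g i) β) ^ 2 := by
  rw [detIm, ← det_transpose]
  rfl

theorem detIm_comp_perm (g : Fin m → X) (σ : Perm (Fin m)) (β : ℝ) :
    detIm f (g ∘ σ) β = detIm f g β := by
  rw [detIm_eq_det_sq, detIm_eq_det_sq,
    show (of fun i => f ((g ∘ σ) i) β) = (of fun i => f (g i) β).submatrix σ id from rfl,
    det_permute, mul_pow, ← Int.cast_pow, ← Units.val_pow_eq_pow_val, Int.units_sq,
    Units.val_one, Int.cast_one, one_mul]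

theorem detIm_eq_of_range_eq {g g' : Fin m → X} (hg : Function.Injective g)
    (hg' : Function.Injective g') (h : Set.range g = Set.range g') :
    detIm f g = detIm f g' := by
  let σ : Perm (Fin m) :=
    (Equiv.ofInjective g hg).trans ((Equiv.setCongr h).trans (Equiv.ofInjective g' hg').symm)
  have hσ : g' ∘ σ = g := funext fun i => by simp [σ, Equiv.apply_ofInjective_symm]
  funext β
  rw [← hσ, detIm_comp_perm]

theorem detIm_eq_zero_of_not_injective {g : Fin m → X} (hg : ¬ Function.Injective g)
    (β : ℝ) : detIm f g β = 0 := by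
  obtain ⟨i, j, hij, hne⟩ := Function.not_injective_iff.1 hg
  rw [detIm_eq_det_sq, det_zero_of_row_eq hne (congrArg (f · β) hij), zero_pow two_ne_zero]

theorem factorial_mul_det_infoMat (ξ : Design X) (β : ℝ) :
    (m.factorial : ℝ) * (infoMat f ξ β).det =
      ∑ g ∈ Fintype.piFinset fun _ : Fin m => ξ.support, (∏ i, ξ.w (g i)) * detIm f g β := by
  have h := factorial_card_smul_det_sum_vecMulVec ξ.support (fun x => ξ.w x • f x β) (f · β)
  simp only [smul_vecMulVec, Fintype.card_fin, nsmul_eq_mul] at h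
  rw [infoMat, h]
  refine Finset.sum_congr rfl fun g _ => ?_
  rw [detIm_eq_det_sq, sq, ← mul_assoc, ← det_mul_column]
  rfl

theorem det_infoMat_nonneg (ξ : Design X) (β : ℝ) : 0 ≤ (infoMat f ξ β).det := by
  have h := factorial_mul_det_infoMat f ξ β
  have : 0 ≤ (m.factorial : ℝ) * (infoMat f ξ β).det :=
    h ▸ Finset.sum_nonneg fun g hg => mul_nonneg
      (Finset.prod_nonneg fun i _ => (ξ.w_pos _ (Fintype.mem_piFinset.1 hg i)).le)
      (sq_nonneg _)
  exact nonneg_of_mul_nonneg_right this (by positivity)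

theorem det_infoMat_le_of_forall_detIm_le (ξ : Design X) {β C : ℝ}
    (h : ∀ g ∈ Fintype.piFinset fun _ : Fin m => ξ.support, detIm f g β ≤ C) :
    (infoMat f ξ β).det ≤ C := by
  have hw : ∑ g ∈ Fintype.piFinset fun _ : Fin m => ξ.support, ∏ i, ξ.w (g i) = 1 := by
    rw [← Finset.prod_univ_sum, ξ.sum_one, Finset.prod_const_one]
  calc (infoMat f ξ β).det ≤ (m.factorial : ℝ) * (infoMat f ξ β).det :=
        le_mul_of_one_le_left (det_infoMat_nonneg f ξ β) (mod_cast m.factorial_pos)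
    _ ≤ ∑ g ∈ Fintype.piFinset fun _ : Fin m => ξ.support, (∏ i, ξ.w (g i)) * C := by
        rw [factorial_mul_det_infoMat]
        exact Finset.sum_le_sum fun g hg => mul_le_mul_of_nonneg_left (h g hg)
          (Finset.prod_nonneg fun i _ => (ξ.w_pos _ (Fintype.mem_piFinset.1 hg i)).le)
    _ = C := by rw [← Finset.sum_mul, hw, one_mul]

theorem det_infoMat_le_of_forall_subset_detIm_le [DecidableEq X] (ξ : Design X) {β C : ℝ}
    (hC : 0 ≤ C) (h : ∀ g : Fin m → X, Function.Injective g →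
      Finset.univ.image g ∈ ξ.support.powersetCard m → detIm f g β ≤ C) :
    (infoMat f ξ β).det ≤ C := by
  refine det_infoMat_le_of_forall_detIm_le f ξ fun g hg => ?_
  by_cases hinj : Function.Injective g
  · refine h g hinj (Finset.mem_powersetCard.2 ⟨?_, ?_⟩)
    · simpa [Finset.image_subset_iff] using Fintype.mem_piFinset.1 hg
    · rw [Finset.card_image_of_injective _ hinj, Finset.card_fin]
  · rw [detIm_eq_zero_of_not_injective f hinj]
    exact hC

/-- Condition (2.9) can be met with anchors depending only on the support set of the tuple. -/
theorem exists_anchor_of_forall_range_eq {Y : Type*} {p : Y → Prop}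
    (q : Y → (ℝ → ℝ) → Prop) (h : ∀ g : Fin m → X, ∃ y, p y ∧ q y (detIm f g))
    (hp : ∃ y, p y) (S : Set X) :
    ∃ y, p y ∧ ∀ g : Fin m → X, Function.Injective g → Set.range g = S → q y (detIm f g) := by
  by_cases hS : ∃ g₀ : Fin m → X, Function.Injective g₀ ∧ Set.range g₀ = S
  · obtain ⟨g₀, hg₀, rfl⟩ := hS
    obtain ⟨y, hy, hq⟩ := h g₀
    exact ⟨y, hy, fun g hg hrange => detIm_eq_of_range_eq f hg hg₀ hrange ▸ hq⟩
  · obtain ⟨y, hy⟩ := hp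
    exact ⟨y, hy, fun g hg hrange => (hS ⟨g, hg, hrange⟩).elim⟩

end Design

theorem maximin_upper_bound_general_general
    (X : Type*) (m : ℕ)
    (βmin βmax : ℝ) (hββ : βmin < βmax)
    (f : X → ℝ → Fin m → ℝ) (ℓ : ℝ → ℝ)
    (hcont : ContinuousOn ℓ (Set.Icc βmin βmax))
    (ξopt : ℝ → Design X)
    (hpos : ∀ β ∈ Set.Icc βmin βmax, 0 < (infoMat f (ξopt β) β).det)
    (c₀ c₁ γ : ℝ) (hc₀ : 0 < c₀) (hc₁ : 0 < c₁) (hγ : 0 < γ)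
    -- condition (2.9)
    (h29 : ∀ xs : Fin m → X, ∃ b : Fin m → ℝ,
        (∀ j, b j ∈ Set.Icc βmin βmax) ∧
        ∀ β ∈ Set.Icc βmin βmax,
          detIm f xs β ≤ c₀ * ∑ j, (infoMat f (ξopt (b j)) β).det)
    -- condition (2.4)/(3.1):  Q(β,β̃) ≤ c₁ |ℓ(β) − ℓ(β̃)|^(−γ)
    (h24 : ∀ β ∈ Set.Icc βmin βmax, ∀ b ∈ Set.Icc βmin βmax,
        ((infoMat f (ξopt b) β).det / (infoMat f (ξopt β) β).det)
          * |ℓ β - ℓ b| ^ γ ≤ c₁)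
    (B : ℝ) (hB : B = ℓ βmax - ℓ βmin) (hBpos : 0 < B)
    (N : ℕ) (ξ : Design X) (hcard : ξ.support.card ≤ N)
    (K : ℕ) (hK : K = m * N.choose m) :
    (⨅ β : Set.Icc βmin βmax,
        (infoMat f ξ (β : ℝ)).det / (infoMat f (ξopt (β : ℝ)) (β : ℝ)).det)
      ≤ c₀ * (m : ℝ) * c₁ * (2 * ((K : ℝ) + 1) / B) ^ γ := by
  classical
  choose b hbI hb using fun S : Finset X => exists_anchor_of_forall_range_eq f
    (p := fun b : Fin m → ℝ => ∀ j, b j ∈ Set.Icc βmin βmax)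
    (fun b φ => ∀ β ∈ Set.Icc βmin βmax, φ β ≤ c₀ * ∑ j, (infoMat f (ξopt (b j)) β).det)
    h29 ⟨fun _ => βmin, fun _ => ⟨le_rfl, hββ.le⟩⟩ S
  set P := (ξ.support.powersetCard m ×ˢ Finset.univ).image
    fun q : Finset X × Fin m => ℓ (b q.1 q.2)
  obtain ⟨β, hβ, hsep⟩ := exists_mem_Icc_forall_le_abs_apply_sub hββ.le hcont
    (sub_pos.1 (hB ▸ hBpos)) P (hK ▸ Finset.card_image_powersetCard_product_le hcard m _)
  rw [← hB] at hsep
  have hD := hpos β hβ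
  have hanchor (S) (hS : S ∈ ξ.support.powersetCard m) (j : Fin m) :
      (infoMat f (ξopt (b S j)) β).det ≤
        c₁ * (2 * ((K : ℝ) + 1) / B) ^ γ * (infoMat f (ξopt β) β).det := by
    rw [← div_le_iff₀ hD, ← inv_div B]
    have hfar := hsep _ (Finset.mem_image.2
      ⟨(S, j), Finset.mem_product.2 ⟨hS, Finset.mem_univ j⟩, rfl⟩)
    exact le_mul_inv_rpow_of_mul_rpow_le (div_nonneg (det_infoMat_nonneg f _ β) hD.le)
      (by positivity) hfar hγ.le (h24 β hβ _ (hbI S j))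
  have hbdd : BddBelow (Set.range fun β : Set.Icc βmin βmax =>
      (infoMat f ξ β).det / (infoMat f (ξopt β) β).det) :=
    ⟨0, by
      rintro _ ⟨β, rfl⟩
      exact div_nonneg (det_infoMat_nonneg f ξ β) (det_infoMat_nonneg f _ β)⟩
  refine (ciInf_le hbdd ⟨β, hβ⟩).trans ?_
  rw [Subtype.coe_mk, div_le_iff₀ hD]
  refine det_infoMat_le_of_forall_subset_detIm_le f ξ (by positivity) fun g hg hS => ?_
  calc detIm f g β ≤ c₀ * ∑ j, (infoMat f (ξopt (b (Finset.univ.image g) j)) β).det :=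
        hb _ g hg (by simp) β hβ
    _ ≤ c₀ * ∑ _j : Fin m, c₁ * (2 * ((K : ℝ) + 1) / B) ^ γ * (infoMat f (ξopt β) β).det := by
        gcongr with j
        exact hanchor _ hS j
    _ = _ := by
        simp only [Finset.sum_const, Finset.card_univ, Fintype.card_fin, nsmul_eq_mul]
        ring

/-- Upper bound (A.10) for general `m`: under conditions (2.9) and (2.4)/(3.1), every
design supported at at most `N` points satisfies `Φ(ξ) ≤ c₀ m c₁ (2(K+1)/B)^γ`, where
`K = m·C(N,m)` and `B = ℓ(β_max) − ℓ(β_min)`. -/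
theorem maximin_upper_bound_general
    (X : Type*) [Nonempty X] (m : ℕ) (hm : 1 ≤ m)
    (βmin βmax : ℝ) (hββ : βmin < βmax)
    (f : X → ℝ → Fin m → ℝ) (ℓ : ℝ → ℝ)
    (hmono : MonotoneOn ℓ (Set.Icc βmin βmax))
    (hcont : ContinuousOn ℓ (Set.Icc βmin βmax))
    (ξopt : ℝ → Design X)
    (hpos : ∀ β ∈ Set.Icc βmin βmax, 0 < (infoMat f (ξopt β) β).det)
    (hopt : ∀ β ∈ Set.Icc βmin βmax, ∀ ξ : Design X,
        (infoMat f ξ β).det ≤ (infoMat f (ξopt β) β).det)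
    (c₀ c₁ γ : ℝ) (hc₀ : 0 < c₀) (hc₁ : 0 < c₁) (hγ : 0 < γ)
    -- condition (2.9)
    (h29 : ∀ xs : Fin m → X, ∃ b : Fin m → ℝ,
        (∀ j, b j ∈ Set.Icc βmin βmax) ∧
        ∀ β ∈ Set.Icc βmin βmax,
          detIm f xs β ≤ c₀ * ∑ j, (infoMat f (ξopt (b j)) β).det)
    -- condition (2.4)/(3.1):  Q(β,β̃) ≤ c₁ |ℓ(β) − ℓ(β̃)|^(−γ)
    (h24 : ∀ β ∈ Set.Icc βmin βmax, ∀ b ∈ Set.Icc βmin βmax,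
        ((infoMat f (ξopt b) β).det / (infoMat f (ξopt β) β).det)
          * |ℓ β - ℓ b| ^ γ ≤ c₁)
    (B : ℝ) (hB : B = ℓ βmax - ℓ βmin) (hBpos : 0 < B)
    (N : ℕ) (ξ : Design X) (hcard : ξ.support.card ≤ N)
    (K : ℕ) (hK : K = m * N.choose m) :
    (⨅ β : Set.Icc βmin βmax,
        (infoMat f ξ (β : ℝ)).det / (infoMat f (ξopt (β : ℝ)) (β : ℝ)).det)
      ≤ c₀ * (m : ℝ) * c₁ * (2 * ((K : ℝ) + 1) / B) ^ γ :=
  maximin_upper_bound_general_general X m βmin βmax hββ f ℓ hcont ξopt hpos c₀ c₁ γ hc₀ hc₁ hγ h29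
    h24 B hB hBpos N ξ hcard K hK
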